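/- arXiv:2104.06062 — 2 statements merged into one kernel-verified Lean document; each statement's English description precedes it below -/
import Mathlib

section
/- Let E(ρ) = Σ_{α=1}^{r} q_α V_α ρ V_α† be a mixed unitary channel on a d-dimensional system, where the V_α are unitary matrices pairwise orthogonal in the Hilbert–Schmidt inner product (trace(V_α† V_β) = d·δ_{αβ}) and q_α ≥ 0 sum to 1. If q_m = max_α q_α, then for every quantum channel E' one has F̄(E'∘E) ≤ (d·q_m + 1)/(d + 1), with equality for E'(ρ) = V_m† ρ V_m. -/
/-!
With `Φ_K = Σ_β K_β ⊗ conj K_β`, the trace `trace (Φ_K Φ_E)` equals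
`Σ_{β,α} q_α |trace (K_β V_α)|²`. Bounding `q_α ≤ q_m`, Bessel's inequality for the orthogonal
family `V_α` (Hilbert–Schmidt norm² `d`) gives `Σ_α |trace (K_β V_α)|² ≤ d · trace (K_β† K_β)`,
and the Kraus condition `Σ_β K_β† K_β = 1` sums these to `d²`. For the single Kraus operator
`V_m†` only `α = m` contributes, with `|trace (V_m† V_m)|² = d²`.
-/

open Matrix Kronecker

/-- The superoperator `Φ = Σ_α K_α ⊗ conj(K_α)` of a channel with Kraus
operators `K_α`. -/
noncomputable def superOp {d r : ℕ} (K : Fin r → Matrix (Fin d) (Fin d) ℂ) :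
    Matrix (Fin d × Fin d) (Fin d × Fin d) ℂ :=
  ∑ α, K α ⊗ₖ (K α).map (starRingEnd ℂ)

/-- The superoperator of the mixed unitary channel `ρ ↦ Σ_α q_α V_α ρ V_α†`. -/
noncomputable def mixedUnitarySuperOp {d r : ℕ} (q : Fin r → ℝ)
    (V : Fin r → Matrix (Fin d) (Fin d) ℂ) :
    Matrix (Fin d × Fin d) (Fin d × Fin d) ℂ :=
  ∑ α, (q α : ℂ) • (V α ⊗ₖ (V α).map (starRingEnd ℂ))

open scoped ComplexOrder

namespace Matrix

variable {n ι : Type*} [Fintype n] [Fintype ι]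

theorem trace_kronecker_map_conj_mul (A B : Matrix n n ℂ) :
    ((A ⊗ₖ A.map (starRingEnd ℂ)) * (B ⊗ₖ B.map (starRingEnd ℂ))).trace =
      Complex.normSq (A * B).trace := by
  rw [← mul_kronecker_mul, trace_kronecker, ← Matrix.map_mul, ← AddMonoidHom.map_trace,
    Complex.mul_conj]

/-- Bessel's inequality for the family `V α / √c`, orthonormal in the Hilbert–Schmidt inner
product, applied to `Mᴴ`. -/
theorem sum_normSq_trace_mul_le [DecidableEq n] [DecidableEq ι] {c : ℝ} (hc : 0 < c)
    (V : ι → Matrix n n ℂ)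
    (horth : ∀ α β, ((V α)ᴴ * V β).trace = if α = β then (c : ℂ) else 0)
    (M : Matrix n n ℂ) :
    ∑ α, Complex.normSq (M * V α).trace ≤ c * (Mᴴ * M).trace.re := by
  let := (1 : Matrix n n ℂ).toMatrixSeminormedAddCommGroup PosSemidef.one
  let := (1 : Matrix n n ℂ).toMatrixInnerProductSpace PosSemidef.one
  have inner_eq (A B : Matrix n n ℂ) : inner ℂ A B = (Aᴴ * B).trace := by
    show (B * 1 * Aᴴ).trace = _
    rw [mul_one, trace_mul_comm]
  have hnormal : Orthonormal ℂ fun α ↦ ((Real.sqrt c : ℂ)⁻¹) • V α := by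
    rw [orthonormal_iff_ite]
    intro α β
    rw [inner_eq, conjTranspose_smul, smul_mul_smul_comm, trace_smul, horth]
    split_ifs
    · rw [smul_eq_mul, star_inv₀, Complex.star_def, Complex.conj_ofReal, ← mul_inv,
        ← Complex.ofReal_mul, Real.mul_self_sqrt hc.le]
      exact inv_mul_cancel₀ (by exact_mod_cast hc.ne')
    · simp
  have hbessel := hnormal.sum_inner_products_le (s := Finset.univ) Mᴴ
  have hcoeff (α : ι) :
      ‖inner ℂ ((Real.sqrt c : ℂ)⁻¹ • V α) Mᴴ‖ ^ 2 = Complex.normSq (M * V α).trace / c := by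
    rw [inner_eq, conjTranspose_smul, smul_mul, trace_smul, ← conjTranspose_mul,
      trace_conjTranspose, norm_smul, norm_star, mul_pow, norm_inv, Complex.norm_real,
      Real.norm_of_nonneg (Real.sqrt_nonneg c), inv_pow, Real.sq_sqrt hc.le,
      Complex.sq_norm, Complex.star_def, Complex.normSq_conj, trace_mul_comm, div_eq_inv_mul]
  have hnorm : ‖Mᴴ‖ ^ 2 = (Mᴴ * M).trace.re := by
    rw [@norm_sq_eq_re_inner ℂ, inner_eq, conjTranspose_conjTranspose, trace_mul_comm]
    rfl
  simp only [hcoeff, hnorm, ← Finset.sum_div] at hbessel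
  rwa [div_le_iff₀' hc] at hbessel

end Matrix

theorem re_trace_superOp_mul_mixedUnitarySuperOp {d r r' : ℕ}
    (K : Fin r' → Matrix (Fin d) (Fin d) ℂ) (q : Fin r → ℝ) (V : Fin r → Matrix (Fin d) (Fin d) ℂ) :
    (superOp K * mixedUnitarySuperOp q V).trace.re =
      ∑ β, ∑ α, q α * Complex.normSq (K β * V α).trace := by
  simp only [superOp, mixedUnitarySuperOp, Finset.sum_mul_sum, trace_sum, Complex.re_sum,
    Matrix.mul_smul, trace_smul, trace_kronecker_map_conj_mul, smul_eq_mul, ← Complex.ofReal_mul,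
    Complex.ofReal_re]

theorem sum_re_trace_conjTranspose_mul_self {d r : ℕ} {K : Fin r → Matrix (Fin d) (Fin d) ℂ}
    (hK : ∑ β, (K β)ᴴ * K β = 1) : ∑ β, ((K β)ᴴ * K β).trace.re = d := by
  rw [← Complex.re_sum, ← trace_sum, hK, trace_one]
  simp

section MixedUnitary

variable {d r : ℕ} {V : Fin r → Matrix (Fin d) (Fin d) ℂ}
  {q : Fin r → ℝ} {m : Fin r}

theorem re_trace_superOp_mul_mixedUnitarySuperOp_le (hd : 0 < d)
    (horth : ∀ α β, ((V α)ᴴ * V β).trace = if α = β then (d : ℂ) else 0) (hqm : 0 ≤ q m)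
    (hm : ∀ α, q α ≤ q m) {r' : ℕ} {K : Fin r' → Matrix (Fin d) (Fin d) ℂ}
    (hK : ∑ β, (K β)ᴴ * K β = 1) :
    (superOp K * mixedUnitarySuperOp q V).trace.re ≤ (d : ℝ) ^ 2 * q m := by
  have horth' : ∀ α β, ((V α)ᴴ * V β).trace = if α = β then ((d : ℝ) : ℂ) else 0 := by
    simpa using horth
  rw [re_trace_superOp_mul_mixedUnitarySuperOp]
  calc ∑ β, ∑ α, q α * Complex.normSq (K β * V α).trace
      ≤ ∑ β, ∑ α, q m * Complex.normSq (K β * V α).trace := by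
        gcongr with β _ α _
        exacts [Complex.normSq_nonneg _, hm α]
    _ = ∑ β, q m * ∑ α, Complex.normSq (K β * V α).trace := by
        simp only [Finset.mul_sum]
    _ ≤ ∑ β, q m * (d * ((K β)ᴴ * K β).trace.re) := by
        gcongr with β _
        exact sum_normSq_trace_mul_le (by exact_mod_cast hd) V horth' (K β)
    _ = (d : ℝ) ^ 2 * q m := by
        rw [← Finset.mul_sum, ← Finset.mul_sum, sum_re_trace_conjTranspose_mul_self hK]
        ring

theorem re_trace_superOp_conjTranspose_mul_mixedUnitarySuperOp
    (horth : ∀ α β, ((V α)ᴴ * V β).trace = if α = β then (d : ℂ) else 0) :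
    (superOp (fun _ : Fin 1 ↦ (V m)ᴴ) * mixedUnitarySuperOp q V).trace.re =
      (d : ℝ) ^ 2 * q m := by
  simp [re_trace_superOp_mul_mixedUnitarySuperOp, horth, apply_ite Complex.normSq, mul_comm, sq]

end MixedUnitary

/-- The Haar-average input-output fidelity `F̄` of the channel with superoperator `Φ`. -/
noncomputable def avgFidelity {d : ℕ} (Φ : Matrix (Fin d × Fin d) (Fin d × Fin d) ℂ) : ℝ :=
  ((d : ℝ) + Φ.trace.re) / ((d : ℝ) * ((d : ℝ) + 1))

section AvgFidelity

variable {d : ℕ} {Φ : Matrix (Fin d × Fin d) (Fin d × Fin d) ℂ} {p : ℝ}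

theorem avgFidelity_le_of_re_trace_le (hd : 0 < d) (h : Φ.trace.re ≤ (d : ℝ) ^ 2 * p) :
    avgFidelity Φ ≤ ((d : ℝ) * p + 1) / ((d : ℝ) + 1) := by
  have hd' : (0 : ℝ) < d := by exact_mod_cast hd
  rw [avgFidelity, div_le_div_iff₀ (by positivity) (by positivity)]
  nlinarith

theorem avgFidelity_eq_of_re_trace_eq (hd : 0 < d) (h : Φ.trace.re = (d : ℝ) ^ 2 * p) :
    avgFidelity Φ = ((d : ℝ) * p + 1) / ((d : ℝ) + 1) := by
  have hd' : (d : ℝ) ≠ 0 := by exact_mod_cast hd.ne'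
  rw [avgFidelity, h]
  field_simp
  ring

end AvgFidelity

theorem stmt_13_general (d r : ℕ) (hd : 0 < d)
    (V : Fin r → Matrix (Fin d) (Fin d) ℂ)
    (horth : ∀ α β, ((V α)ᴴ * V β).trace = if α = β then (d : ℂ) else 0)
    (q : Fin r → ℝ) (hq : ∀ α, 0 ≤ q α)
    (m : Fin r) (hm : ∀ α, q α ≤ q m) :
    (∀ (r' : ℕ) (K' : Fin r' → Matrix (Fin d) (Fin d) ℂ),
        ∑ β, (K' β)ᴴ * K' β = 1 →
          ((d : ℝ) + (superOp K' * mixedUnitarySuperOp q V).trace.re) /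
              ((d : ℝ) * ((d : ℝ) + 1)) ≤
            ((d : ℝ) * q m + 1) / ((d : ℝ) + 1)) ∧
      ((d : ℝ) + (superOp (fun _ : Fin 1 => (V m)ᴴ) * mixedUnitarySuperOp q V).trace.re) /
          ((d : ℝ) * ((d : ℝ) + 1)) =
        ((d : ℝ) * q m + 1) / ((d : ℝ) + 1) :=
  ⟨fun _ _ hK ↦ avgFidelity_le_of_re_trace_le hd
      (re_trace_superOp_mul_mixedUnitarySuperOp_le hd horth (hq m) hm hK),
    avgFidelity_eq_of_re_trace_eq hd (re_trace_superOp_conjTranspose_mul_mixedUnitarySuperOp horth)⟩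

theorem stmt_13 (d r : ℕ) (hd : 0 < d)
    (V : Fin r → Matrix (Fin d) (Fin d) ℂ)
    (hV : ∀ α, V α ∈ Matrix.unitaryGroup (Fin d) ℂ)
    (horth : ∀ α β, ((V α)ᴴ * V β).trace = if α = β then (d : ℂ) else 0)
    (q : Fin r → ℝ) (hq : ∀ α, 0 ≤ q α) (hsum : ∑ α, q α = 1)
    (m : Fin r) (hm : ∀ α, q α ≤ q m) :
    (∀ (r' : ℕ) (K' : Fin r' → Matrix (Fin d) (Fin d) ℂ),
        ∑ β, (K' β)ᴴ * K' β = 1 →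
          ((d : ℝ) + (superOp K' * mixedUnitarySuperOp q V).trace.re) /
              ((d : ℝ) * ((d : ℝ) + 1)) ≤
            ((d : ℝ) * q m + 1) / ((d : ℝ) + 1)) ∧
      ((d : ℝ) + (superOp (fun _ : Fin 1 => (V m)ᴴ) * mixedUnitarySuperOp q V).trace.re) /
          ((d : ℝ) * ((d : ℝ) + 1)) =
        ((d : ℝ) * q m + 1) / ((d : ℝ) + 1) :=
  stmt_13_general d r hd V horth q hq m hm
end

section
/- Let E(ρ) = Σ_{α=1}^{q} X_α ρ X_α† be a channel whose (not necessarily unitary) operators satisfy Σ_α X_α† X_α = Σ_α X_α X_α† = I_d and trace(X_α† X_β) = (d/q)·δ_{αβ}. Then the dual channel E†(ρ) = Σ_α X_α† ρ X_α is a valid quantum channel and satisfies trace(Φ_{E†} Φ_E) = d²/q, saturating the upper bound d·p_m where p_m = d/q is the largest eigenvalue of the Choi matrix of E; hence E† is the quasi-inverse of E and F̄(E†∘E) = (d + q)/(q(d + 1)). -/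
/-!
Vectorizing matrices turns `trace (Aᴴ * B)` into the Euclidean inner product, so the `X α` form
an orthogonal family whose vectors all have squared norm `d / q`. Since
`trace (Φ_K Φ_X) = Σ_{β,α} |trace (K β * X α)|²`, Bessel's inequality bounds the inner sum by
`(d / q) · trace ((K β)ᴴ * K β)`, and trace preservation of `K` sums these bounds to `d · d / q`.
For `K = Xᴴ` the orthogonality relations evaluate the double sum exactly: `q · (d / q)² = d² / q`.
-/

open Matrix Kronecker

theorem sum_norm_inner_sq_le_of_inner_eq_ite {𝕜 E ι : Type*} [RCLike 𝕜] [NormedAddCommGroup E]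
    [InnerProductSpace 𝕜 E] [Fintype ι] [DecidableEq ι] {w : ι → E} {c : ℝ} (hc : 0 < c)
    (hw : ∀ i j, inner 𝕜 (w i) (w j) = if i = j then (c : 𝕜) else 0) (x : E) :
    ∑ i, ‖inner 𝕜 (w i) x‖ ^ 2 ≤ c * ‖x‖ ^ 2 := by
  have hs : (√c : 𝕜) * √c = c := by norm_cast; exact Real.mul_self_sqrt hc.le
  have hs0 : (√c : 𝕜) ≠ 0 := by exact_mod_cast (Real.sqrt_pos.2 hc).ne'
  have hu : Orthonormal 𝕜 fun i => ((√c : 𝕜)⁻¹) • w i := by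
    rw [orthonormal_iff_ite]
    intro i j
    rw [inner_smul_left, inner_smul_right, hw, RCLike.conj_inv, RCLike.conj_ofReal]
    split_ifs
    · rw [← hs]; field_simp
    · simp
  have hbessel := hu.sum_inner_products_le x (s := Finset.univ)
  simp only [inner_smul_left, norm_mul, mul_pow, norm_inv, RCLike.norm_conj, RCLike.norm_ofReal,
    abs_of_nonneg (Real.sqrt_nonneg c), inv_pow, Real.sq_sqrt hc.le, ← Finset.mul_sum] at hbessel
  rwa [inv_mul_le_iff₀ hc] at hbessel

section HilbertSchmidt

variable {ι m n : Type*} [Fintype ι] [DecidableEq ι] [Fintype m] [Fintype n]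

theorem Matrix.inner_toLp_vec {𝕜 : Type*} [RCLike 𝕜] (A B : Matrix m n 𝕜) :
    inner 𝕜 (WithLp.toLp 2 A.vec) (WithLp.toLp 2 B.vec) = (Aᴴ * B).trace := by
  rw [EuclideanSpace.inner_toLp_toLp, dotProduct_comm, star_vec_dotProduct_vec]

theorem sum_normSq_trace_mul_le {X : ι → Matrix m n ℂ} {c : ℝ} (hc : 0 < c)
    (horth : ∀ α β, ((X α)ᴴ * X β).trace = if α = β then (c : ℂ) else 0) (A : Matrix n m ℂ) :
    ∑ α, Complex.normSq (A * X α).trace ≤ c * (Aᴴ * A).trace.re := by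
  have hbessel := sum_norm_inner_sq_le_of_inner_eq_ite (𝕜 := ℂ) hc
    (w := fun α => WithLp.toLp 2 (X α).vec)
    (fun α β => (Matrix.inner_toLp_vec _ _).trans (horth α β)) (WithLp.toLp 2 Aᴴ.vec)
  rw [@norm_sq_eq_re_inner ℂ] at hbessel
  simp only [Matrix.inner_toLp_vec, conjTranspose_conjTranspose, ← conjTranspose_mul,
    trace_conjTranspose, Complex.sq_norm, Complex.star_def, Complex.normSq_conj] at hbessel
  rwa [trace_mul_comm] at hbessel

theorem sum_sum_normSq_trace_mul_le {ι' : Type*} [Fintype ι'] [DecidableEq m]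
    {X : ι → Matrix m n ℂ} {c : ℝ} (hc : 0 < c)
    (horth : ∀ α β, ((X α)ᴴ * X β).trace = if α = β then (c : ℂ) else 0)
    {K : ι' → Matrix n m ℂ} (hK : ∑ β, (K β)ᴴ * K β = 1) :
    ∑ β, ∑ α, Complex.normSq (K β * X α).trace ≤ c * Fintype.card m := by
  have htr : ∑ β, ((K β)ᴴ * K β).trace.re = Fintype.card m := by
    simpa [trace_sum] using congrArg (fun M => M.trace.re) hK
  calc ∑ β, ∑ α, Complex.normSq (K β * X α).trace
      ≤ ∑ β, c * ((K β)ᴴ * K β).trace.re :=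
        Finset.sum_le_sum fun β _ => sum_normSq_trace_mul_le hc horth (K β)
    _ = c * Fintype.card m := by rw [← Finset.mul_sum, htr]

theorem sum_sum_normSq_trace_conjTranspose_mul {X : ι → Matrix m n ℂ} {c : ℝ}
    (horth : ∀ α β, ((X α)ᴴ * X β).trace = if α = β then (c : ℂ) else 0) :
    ∑ β, ∑ α, Complex.normSq ((X β)ᴴ * X α).trace = Fintype.card ι * c ^ 2 := by
  simp [horth, apply_ite Complex.normSq, sq]

end HilbertSchmidt

theorem trace_superOp_mul_superOp {d r r' : ℕ} (K : Fin r' → Matrix (Fin d) (Fin d) ℂ)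
    (X : Fin r → Matrix (Fin d) (Fin d) ℂ) :
    (superOp K * superOp X).trace
      = ((∑ β, ∑ α, Complex.normSq (K β * X α).trace : ℝ) : ℂ) := by
  simp only [superOp, Finset.sum_mul_sum, trace_sum, ← mul_kronecker_mul, trace_kronecker,
    ← Matrix.map_mul, ← AddMonoidHom.map_trace, Complex.ofReal_sum,
    Complex.normSq_eq_conj_mul_self, mul_comm]

theorem stmt_14_general (d q : ℕ) (hd : 0 < d) (hq : 0 < q)
    (X : Fin q → Matrix (Fin d) (Fin d) ℂ)
    (h2 : ∑ α, X α * (X α)ᴴ = 1)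
    (horth : ∀ α β, ((X α)ᴴ * X β).trace = if α = β then ((d : ℂ) / (q : ℂ)) else 0) :
    -- the dual `E†` with Kraus operators `X_α†` is a valid (trace-preserving) channel
    (∑ α, ((X α)ᴴ)ᴴ * (X α)ᴴ = 1) ∧
      -- `trace(Φ_{E†} Φ_E) = d²/q`
      (superOp (fun α => (X α)ᴴ) * superOp X).trace = (d : ℂ) ^ 2 / (q : ℂ) ∧
      -- this saturates the general upper bound `d·p_m` with `p_m = d/q`:
      -- no channel `E'` can do better, so `E†` is the quasi-inverse
      (∀ (r' : ℕ) (K' : Fin r' → Matrix (Fin d) (Fin d) ℂ),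
        ∑ β, (K' β)ᴴ * K' β = 1 →
          (superOp K' * superOp X).trace.re ≤ (d : ℝ) * ((d : ℝ) / (q : ℝ))) ∧
      -- the corrected average fidelity
      ((d : ℝ) + (superOp (fun α => (X α)ᴴ) * superOp X).trace.re) /
          ((d : ℝ) * ((d : ℝ) + 1)) =
        ((d : ℝ) + (q : ℝ)) / ((q : ℝ) * ((d : ℝ) + 1)) := by
  have hc : (0 : ℝ) < d / q := by positivity
  have horth' : ∀ α β, ((X α)ᴴ * X β).trace = if α = β then ((d / q : ℝ) : ℂ) else 0 := by
    push_cast; exact horth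
  have htrace : (superOp (fun α => (X α)ᴴ) * superOp X).trace = ((d ^ 2 / q : ℝ) : ℂ) := by
    rw [trace_superOp_mul_superOp, sum_sum_normSq_trace_conjTranspose_mul horth', Fintype.card_fin]
    field_simp
  refine ⟨by simpa only [conjTranspose_conjTranspose] using h2, by rw [htrace]; push_cast; rfl,
    fun r' K' hK' => ?_, ?_⟩
  · rw [trace_superOp_mul_superOp, Complex.ofReal_re, mul_comm]
    simpa using sum_sum_normSq_trace_mul_le hc horth' hK'
  · rw [htrace, Complex.ofReal_re]
    field_simp
    ring

theorem stmt_14 (d q : ℕ) (hd : 0 < d) (hq : 0 < q)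
    (X : Fin q → Matrix (Fin d) (Fin d) ℂ)
    (h1 : ∑ α, (X α)ᴴ * X α = 1) (h2 : ∑ α, X α * (X α)ᴴ = 1)
    (horth : ∀ α β, ((X α)ᴴ * X β).trace = if α = β then ((d : ℂ) / (q : ℂ)) else 0) :
    -- the dual `E†` with Kraus operators `X_α†` is a valid (trace-preserving) channel
    (∑ α, ((X α)ᴴ)ᴴ * (X α)ᴴ = 1) ∧
      -- `trace(Φ_{E†} Φ_E) = d²/q`
      (superOp (fun α => (X α)ᴴ) * superOp X).trace = (d : ℂ) ^ 2 / (q : ℂ) ∧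
      -- this saturates the general upper bound `d·p_m` with `p_m = d/q`:
      -- no channel `E'` can do better, so `E†` is the quasi-inverse
      (∀ (r' : ℕ) (K' : Fin r' → Matrix (Fin d) (Fin d) ℂ),
        ∑ β, (K' β)ᴴ * K' β = 1 →
          (superOp K' * superOp X).trace.re ≤ (d : ℝ) * ((d : ℝ) / (q : ℝ))) ∧
      -- the corrected average fidelity
      ((d : ℝ) + (superOp (fun α => (X α)ᴴ) * superOp X).trace.re) /
          ((d : ℝ) * ((d : ℝ) + 1)) =
        ((d : ℝ) + (q : ℝ)) / ((q : ℝ) * ((d : ℝ) + 1)) :=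
  stmt_14_general d q hd hq X h2 horth
end
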